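/- arXiv:0911.2751 — 5 statements merged into one kernel-verified Lean document; each statement's English description precedes it below -/
import Mathlib

section
/- Let 𝔄 be a unital C*-algebra, 𝔛 a Hilbert 𝔄-module, and x₁,…,xₙ ∈ 𝔛. If there exist real numbers k₁,k₂ ≥ 0 and a vector e ∈ 𝔛 with |e| ≤ 1 (i.e. ⟨e,e⟩ ≤ 1 in 𝔄) such that k₁‖xⱼ‖ ≤ Re⟨e,xⱼ⟩ and k₂‖xⱼ‖ ≤ Im⟨e,xⱼ⟩ (as order inequalities in 𝔄, with the scalars identified with scalar multiples of the unit) for all 1 ≤ j ≤ n, then (k₁²+k₂²)^{1/2} ∑ⱼ‖xⱼ‖ ≤ ‖∑ⱼ xⱼ‖. -/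
open scoped RightActions

/-- Hermitian real part of an element of a complex *-algebra. -/
noncomputable def cre {A : Type*} [Ring A] [StarRing A] [Module ℂ A] (a : A) : A :=
  (2 : ℂ)⁻¹ • (a + star a)

/-- Hermitian imaginary part of an element of a complex *-algebra. -/
noncomputable def cim {A : Type*} [Ring A] [StarRing A] [Module ℂ A] (a : A) : A :=
  (2 * Complex.I)⁻¹ • (a - star a)

/-- The Hilbert C⋆-module class as it stood in Mathlib of December 2024: a right `A`-module
(action of `Aᵐᵒᵖ`) with `⟪x, y <• a⟫ = ⟪x, y⟫ * a`. -/
class OldCStarModule (A E : Type*) [NonUnitalSemiring A] [StarRing A]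
    [Module ℂ A] [AddCommGroup E] [Module ℂ E] [PartialOrder A] [SMul Aᵐᵒᵖ E] [Norm A] [Norm E]
    extends Inner A E where
  inner_add_right {x} {y} {z} : inner x (y + z) = inner x y + inner x z
  inner_self_nonneg {x} : 0 ≤ inner x x
  inner_self {x} : inner x x = 0 ↔ x = 0
  inner_op_smul_right {a : A} {x y : E} : inner x (y <• a) = inner x y * a
  inner_smul_right_complex {z : ℂ} {x} {y} : inner x (z • y) = z • inner x y
  star_inner x y : star (inner x y) = inner y x
  norm_eq_sqrt_norm_inner_self x : ‖x‖ = √‖inner x x‖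

/-!
Put `T = ∑ ‖xⱼ‖` and `a = ⟪e, ∑ xⱼ⟫`. Summing the hypotheses gives `k₁ T ≤ Re a` and
`k₂ T ≤ Im a`. For `c = k₁ - k₂ i` one has `Re (c a) = k₁ Re a + k₂ Im a ≥ (k₁² + k₂²) T`, while
`‖Re (c a)‖ ≤ |c| ‖a‖ = √(k₁² + k₂²) ‖a‖`, and `‖a‖ ≤ ‖e‖ ‖∑ xⱼ‖ ≤ ‖∑ xⱼ‖` by Cauchy–Schwarz.
-/

namespace OldCStarModule

lemma norm_nonneg (A : Type*) {E : Type*} [NonUnitalSemiring A] [StarRing A] [Module ℂ A]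
    [AddCommGroup E] [Module ℂ E] [PartialOrder A] [SMul Aᵐᵒᵖ E] [Norm A] [Norm E]
    [OldCStarModule A E] (x : E) : 0 ≤ ‖x‖ := by
  rw [norm_eq_sqrt_norm_inner_self (A := A) x]
  exact Real.sqrt_nonneg _

lemma norm_eq_zero_of_subsingleton (A : Type*) {E : Type*} [NonUnitalNormedRing A]
    [StarRing A] [Module ℂ A] [AddCommGroup E] [Module ℂ E] [PartialOrder A] [SMul Aᵐᵒᵖ E]
    [Norm E] [OldCStarModule A E] [Subsingleton A] (x : E) : ‖x‖ = 0 := by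
  rw [norm_eq_sqrt_norm_inner_self (A := A) x, Subsingleton.elim (inner A x x) 0]
  simp

variable {A E : Type*} [CStarAlgebra A] [PartialOrder A] [AddCommGroup E] [Module ℂ E]
  [SMul Aᵐᵒᵖ E] [Norm E] [OldCStarModule A E]

lemma inner_add_left (x y z : E) : inner A (x + y) z = inner A x z + inner A y z := by
  rw [← star_inner (A := A) z, inner_add_right, star_add, star_inner, star_inner]

lemma norm_le_one_of_inner_self_le_one [StarOrderedRing A] {e : E} (he : inner A e e ≤ 1) :
    ‖e‖ ≤ 1 := by
  rw [norm_eq_sqrt_norm_inner_self (A := A) e]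
  exact Real.sqrt_le_one.mpr <| (CStarAlgebra.norm_le_one_iff_of_nonneg _ inner_self_nonneg).mpr he

/-- Swapping the arguments of the inner product, acting by `a` as `<• star a` and conjugating the
complex structure turns a right module in this convention into a `CStarModule` in Mathlib's
convention, so that the general theory (Cauchy–Schwarz in particular) applies. -/
def Flip (E : Type*) : Type _ := E

@[reducible] def ofFlip {E : Type*} (x : Flip E) : E := x

instance : AddCommGroup (Flip E) := inferInstanceAs (AddCommGroup E)

noncomputable instance : Module ℂ (Flip E) := Module.compHom E (starRingEnd ℂ)

instance : Norm (Flip E) := inferInstanceAs (Norm E)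

instance : SMul A (Flip E) := ⟨fun a y => (ofFlip y <• star a : E)⟩

instance : Inner A (Flip E) := ⟨fun x y => inner A (ofFlip y) (ofFlip x)⟩

noncomputable instance : CStarModule A (Flip E) where
  inner_add_right {x y z} := inner_add_left (ofFlip y) (ofFlip z) (ofFlip x)
  inner_self_nonneg {x} := inner_self_nonneg (x := ofFlip x)
  inner_self {x} := inner_self (x := ofFlip x)
  inner_op_smul_right {a x y} := by
    change inner A (ofFlip y <• star a) (ofFlip x) = a * inner A (ofFlip y) (ofFlip x)
    rw [← star_inner (A := A) (ofFlip x), inner_op_smul_right, star_mul, star_star, star_inner]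
  inner_smul_right_complex {z x y} := by
    change inner A (starRingEnd ℂ z • ofFlip y) (ofFlip x) = z • inner A (ofFlip y) (ofFlip x)
    rw [← star_inner (A := A) (ofFlip x), inner_smul_right_complex, star_smul, star_inner]
    simp
  star_inner x y := star_inner (A := A) (ofFlip y) (ofFlip x)
  norm_eq_sqrt_norm_inner_self x := norm_eq_sqrt_norm_inner_self (A := A) (ofFlip x)

lemma norm_inner_le [StarOrderedRing A] (x y : E) : ‖(inner A x y : A)‖ ≤ ‖x‖ * ‖y‖ := by
  rw [mul_comm]
  exact CStarModule.norm_inner_le (Flip E) (x := (y : Flip E)) (y := (x : Flip E))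

lemma inner_sum_right {ι : Type*} (s : Finset ι) (x : E) (y : ι → E) :
    inner A x (∑ i ∈ s, y i) = ∑ i ∈ s, inner A x (y i) :=
  CStarModule.inner_sum_left (A := A) (E := Flip E) (x := y) (y := (x : Flip E))

end OldCStarModule

section ReIm

variable {A : Type*} [Ring A] [StarRing A] [Module ℂ A]

lemma cre_sum {ι : Type*} (s : Finset ι) (f : ι → A) : cre (∑ i ∈ s, f i) = ∑ i ∈ s, cre (f i) := by
  simp only [cre, star_sum, ← Finset.sum_add_distrib, Finset.smul_sum]

lemma cim_sum {ι : Type*} (s : Finset ι) (f : ι → A) : cim (∑ i ∈ s, f i) = ∑ i ∈ s, cim (f i) := by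
  simp only [cim, star_sum, ← Finset.sum_sub_distrib, Finset.smul_sum]

lemma smul_cre_add_smul_cim [StarModule ℂ A] (k₁ k₂ : ℝ) (a : A) :
    k₁ • cre a + k₂ • cim a = cre (((k₁ : ℂ) - k₂ * Complex.I) • a) := by
  rw [cre, cim, cre, star_smul]
  match_scalars <;> simp [Complex.ext_iff, div_eq_mul_inv, mul_comm]

end ReIm

section CStarAlgebra

variable {A : Type*} [CStarAlgebra A]

lemma norm_cre_le (a : A) : ‖cre a‖ ≤ ‖a‖ := by
  calc ‖cre a‖ ≤ ‖(2 : ℂ)⁻¹‖ * (‖a‖ + ‖star a‖) :=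
        (norm_smul_le _ _).trans (by gcongr; exact norm_add_le _ _)
    _ = ‖a‖ := by rw [norm_star]; norm_num; ring

variable [PartialOrder A] [StarOrderedRing A]

lemma le_norm_of_smul_one_le [Nontrivial A] {r : ℝ} {b : A} (hr : 0 ≤ r) (h : r • (1 : A) ≤ b) :
    r ≤ ‖b‖ := by
  calc r = ‖r • (1 : A)‖ := by rw [norm_smul, norm_one, mul_one, Real.norm_of_nonneg hr]
    _ ≤ ‖b‖ := CStarAlgebra.norm_le_norm_of_nonneg_of_le (smul_nonneg hr zero_le_one) h

lemma sqrt_sq_add_sq_mul_le_norm [Nontrivial A] {a : A} {k₁ k₂ t : ℝ} (hk₁ : 0 ≤ k₁)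
    (hk₂ : 0 ≤ k₂) (ht : 0 ≤ t) (h₁ : (k₁ * t) • (1 : A) ≤ cre a)
    (h₂ : (k₂ * t) • (1 : A) ≤ cim a) : √(k₁ ^ 2 + k₂ ^ 2) * t ≤ ‖a‖ := by
  set c : ℂ := (k₁ : ℂ) - k₂ * Complex.I
  have hc : ‖c‖ = √(k₁ ^ 2 + k₂ ^ 2) := by
    simpa [c, sub_eq_add_neg] using Complex.norm_add_mul_I k₁ (-k₂)
  have hre : ((k₁ ^ 2 + k₂ ^ 2) * t) • (1 : A) ≤ cre (c • a) := by
    calc ((k₁ ^ 2 + k₂ ^ 2) * t) • (1 : A) = k₁ • ((k₁ * t) • 1) + k₂ • ((k₂ * t) • 1) := by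
          rw [smul_smul, smul_smul, ← add_smul]; ring_nf
      _ ≤ k₁ • cre a + k₂ • cim a := by gcongr
      _ = cre (c • a) := smul_cre_add_smul_cim k₁ k₂ a
  have key : √(k₁ ^ 2 + k₂ ^ 2) * (√(k₁ ^ 2 + k₂ ^ 2) * t) ≤ √(k₁ ^ 2 + k₂ ^ 2) * ‖a‖ := by
    calc √(k₁ ^ 2 + k₂ ^ 2) * (√(k₁ ^ 2 + k₂ ^ 2) * t) = (k₁ ^ 2 + k₂ ^ 2) * t := by
          rw [← mul_assoc, Real.mul_self_sqrt (by positivity)]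
      _ ≤ ‖cre (c • a)‖ := le_norm_of_smul_one_le (by positivity) hre
      _ ≤ ‖c • a‖ := norm_cre_le _
      _ = √(k₁ ^ 2 + k₂ ^ 2) * ‖a‖ := by rw [norm_smul, hc]
  rcases (Real.sqrt_nonneg (k₁ ^ 2 + k₂ ^ 2)).eq_or_lt with hs | hs
  · rw [← hs, zero_mul]; exact norm_nonneg a
  · exact le_of_mul_le_mul_left key hs

end CStarAlgebra

theorem stmt0 {A E : Type*} [CStarAlgebra A] [PartialOrder A] [StarOrderedRing A]
    [AddCommGroup E] [Module ℂ E] [SMul Aᵐᵒᵖ E] [Norm E] [OldCStarModule A E]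
    (n : ℕ) (x : Fin n → E) (e : E) (he : (inner A e e : A) ≤ 1)
    (k₁ k₂ : ℝ) (hk₁ : 0 ≤ k₁) (hk₂ : 0 ≤ k₂)
    (h₁ : ∀ j, (k₁ * ‖x j‖) • (1 : A) ≤ cre (inner A e (x j) : A))
    (h₂ : ∀ j, (k₂ * ‖x j‖) • (1 : A) ≤ cim (inner A e (x j) : A)) :
    Real.sqrt (k₁ ^ 2 + k₂ ^ 2) * ∑ j, ‖x j‖ ≤ ‖∑ j, x j‖ := by
  rcases subsingleton_or_nontrivial A with _ | _
  · simp [OldCStarModule.norm_eq_zero_of_subsingleton A]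
  have hsum : inner A e (∑ j, x j) = ∑ j, (inner A e (x j) : A) :=
    OldCStarModule.inner_sum_right _ _ _
  calc √(k₁ ^ 2 + k₂ ^ 2) * ∑ j, ‖x j‖ ≤ ‖(inner A e (∑ j, x j) : A)‖ := by
        refine sqrt_sq_add_sq_mul_le_norm hk₁ hk₂
          (Finset.sum_nonneg fun j _ => OldCStarModule.norm_nonneg A (x j)) ?_ ?_
        · rw [hsum, cre_sum, Finset.mul_sum, Finset.sum_smul]
          exact Finset.sum_le_sum fun j _ => h₁ j
        · rw [hsum, cim_sum, Finset.mul_sum, Finset.sum_smul]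
          exact Finset.sum_le_sum fun j _ => h₂ j
    _ ≤ ‖e‖ * ‖∑ j, x j‖ := OldCStarModule.norm_inner_le e _
    _ ≤ ‖∑ j, x j‖ := mul_le_of_le_one_left (OldCStarModule.norm_nonneg A _)
        (OldCStarModule.norm_le_one_of_inner_self_le_one he)
end

section
/- Let 𝔛 be a Hilbert module over a C*-algebra 𝔄 and x, y ∈ 𝔛 with x ≠ 0. If equality holds in the Cauchy–Schwarz inequality in the strong form |⟨x,y⟩|² = ‖x‖²‖y‖²·1 (equivalently |⟨x,y⟩| = ‖x‖‖y‖ as elements of 𝔄, identifying scalars with multiples of the unit), then y = x·⟨x,y⟩/‖x‖². -/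
open scoped RightActions

/-- The Hilbert C⋆-module class as Mathlib (Dec 2024) defined it under the name `CStarModule`:
a right `A`-module, inner product `A`-linear in the second variable on the right. -/
class RightCStarModule (A E : Type*) [NonUnitalSemiring A] [StarRing A]
    [Module ℂ A] [AddCommGroup E] [Module ℂ E] [PartialOrder A] [SMul Aᵐᵒᵖ E] [Norm A] [Norm E]
    extends Inner A E where
  inner_add_right {x} {y} {z} : inner x (y + z) = inner x y + inner x z
  inner_self_nonneg {x} : 0 ≤ inner x x
  inner_self {x} : inner x x = 0 ↔ x = 0
  inner_op_smul_right {a : A} {x y : E} : inner x (y <• a) = inner x y * a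
  inner_smul_right_complex {z : ℂ} {x} {y} : inner x (z • y) = z • inner x y
  star_inner x y : star (inner x y) = inner y x
  norm_eq_sqrt_norm_inner_self x : ‖x‖ = √‖inner x x‖

namespace RightCStarModule

variable {A E : Type*} [CStarAlgebra A] [PartialOrder A] [AddCommGroup E] [Module ℂ E]
  [SMul Aᵐᵒᵖ E] [Norm E] [RightCStarModule A E]

lemma inner_sub_right {x y z : E} : inner A x (y - z) = inner A x y - inner A x z :=
  (AddMonoidHom.mk' (fun w => inner A x w)
    (fun _ _ => RightCStarModule.inner_add_right)).map_sub y z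

lemma inner_sub_left {x y z : E} : inner A (x - y) z = inner A x z - inner A y z := by
  rw [← RightCStarModule.star_inner z (x - y), inner_sub_right, star_sub,
    RightCStarModule.star_inner, RightCStarModule.star_inner]

lemma inner_op_smul_left {a : A} {x y : E} : inner A (x <• a) y = star a * inner A x y := by
  rw [← RightCStarModule.star_inner y, RightCStarModule.inner_op_smul_right, star_mul,
    RightCStarModule.star_inner]

lemma inner_smul_right_real {z : ℝ} {x y : E} : inner A x (z • y) = z • inner A x y := by
  rw [← Complex.coe_smul, RightCStarModule.inner_smul_right_complex, Complex.coe_smul]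

lemma inner_smul_left_real {z : ℝ} {x y : E} : inner A (z • x) y = z • inner A x y := by
  rw [← RightCStarModule.star_inner y, inner_smul_right_real, ← Complex.coe_smul, star_smul,
    RightCStarModule.star_inner, Complex.star_def, Complex.conj_ofReal, Complex.coe_smul]

lemma isSelfAdjoint_inner_self {x : E} : IsSelfAdjoint (inner A x x) :=
  RightCStarModule.star_inner _ _

lemma norm_sq_eq {x : E} : ‖x‖ ^ 2 = ‖inner A x x‖ := by
  rw [RightCStarModule.norm_eq_sqrt_norm_inner_self (A := A) x, Real.sq_sqrt (norm_nonneg _)]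

end RightCStarModule

namespace RightCStarModule

lemma norm_pos {A E : Type*} [CStarAlgebra A] [PartialOrder A] [AddCommGroup E] [Module ℂ E]
    [SMul Aᵐᵒᵖ E] [Norm E] [RightCStarModule A E] {x : E} (hx : x ≠ 0) : 0 < ‖x‖ := by
  rw [RightCStarModule.norm_eq_sqrt_norm_inner_self (A := A) x, Real.sqrt_pos, _root_.norm_pos_iff]
  intro H
  exact hx (RightCStarModule.inner_self.mp H)

end RightCStarModule

theorem stmt2 {A E : Type*} [CStarAlgebra A] [PartialOrder A] [StarOrderedRing A]
    [AddCommGroup E] [Module ℂ E] [SMul Aᵐᵒᵖ E] [Norm E] [RightCStarModule A E]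
    (x y : E) (hx : x ≠ 0)
    (h : star (inner A x y : A) * inner A x y = (‖x‖ ^ 2 * ‖y‖ ^ 2) • (1 : A)) :
    y = ((‖x‖ : ℂ) ^ 2)⁻¹ • (x <• (inner A x y : A)) := by
  set a : A := inner A x y with ha
  set c : ℝ := ‖x‖ ^ 2 with hc
  have hxn : 0 < ‖x‖ := RightCStarModule.norm_pos (A := A) hx
  have hcpos : 0 < c := by positivity
  set z : E := c • y - x <• a with hz
  have hyx : (inner A y x : A) = star a := by rw [ha, RightCStarModule.star_inner]
  have hzz : (inner A z z : A) =
      (c ^ 2) • (inner A y y : A) - (2 * c) • (star a * a) + star a * (inner A x x : A) * a := by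
    simp only [hz, RightCStarModule.inner_sub_right, RightCStarModule.inner_sub_left,
      RightCStarModule.inner_op_smul_right, RightCStarModule.inner_op_smul_left,
      RightCStarModule.inner_smul_right_real, RightCStarModule.inner_smul_left_real, hyx, ← ha]
    simp only [smul_sub, smul_smul, sub_mul, smul_mul_assoc, mul_assoc, pow_two]
    module
  have hxx_le : (inner A x x : A) ≤ c • 1 := by
    have := IsSelfAdjoint.le_algebraMap_norm_self (a := (inner A x x : A))
      RightCStarModule.isSelfAdjoint_inner_self
    rwa [Algebra.algebraMap_eq_smul_one, ← RightCStarModule.norm_sq_eq, ← hc] at this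
  have hyy_le : (inner A y y : A) ≤ (‖y‖ ^ 2) • 1 := by
    have := IsSelfAdjoint.le_algebraMap_norm_self (a := (inner A y y : A))
      RightCStarModule.isSelfAdjoint_inner_self
    rwa [Algebra.algebraMap_eq_smul_one, ← RightCStarModule.norm_sq_eq] at this
  have key : (inner A z z : A) ≤ 0 := by
    rw [hzz]
    have h1 : star a * (inner A x x : A) * a ≤ c • (star a * a) := by
      have := star_left_conjugate_le_conjugate hxx_le a
      calc star a * (inner A x x : A) * a ≤ star a * (c • 1) * a := this
        _ = c • (star a * a) := by
            rw [mul_smul_comm, mul_one, smul_mul_assoc]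
    have h2 : (c ^ 2) • (inner A y y : A) ≤ c • (star a * a) := by
      calc (c ^ 2) • (inner A y y : A) ≤ (c ^ 2) • ((‖y‖ ^ 2) • 1) := by
            exact smul_le_smul_of_nonneg_left hyy_le (by positivity)
        _ = c • (star a * a) := by
            rw [h, smul_smul, smul_smul]; ring_nf
    calc (c ^ 2) • (inner A y y : A) - (2 * c) • (star a * a) + star a * (inner A x x : A) * a
        ≤ c • (star a * a) - (2 * c) • (star a * a) + c • (star a * a) := by
          exact add_le_add (sub_le_sub_right h2 _) h1
      _ = 0 := by module
  have hz0 : z = 0 := by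
    rw [← RightCStarModule.inner_self (A := A)]
    exact le_antisymm key RightCStarModule.inner_self_nonneg
  have hcy : c • y = x <• a := by
    have := sub_eq_zero.mp hz0
    exact this
  have : ((c : ℂ)) • y = x <• a := by
    rw [← hcy]; norm_cast
  rw [← this]
  rw [smul_smul]
  have hcne : (c : ℂ) ≠ 0 := by exact_mod_cast hcpos.ne'
  have : ((‖x‖ : ℂ) ^ 2)⁻¹ * (c : ℂ) = 1 := by
    have : (‖x‖ : ℂ) ≠ 0 := by exact_mod_cast hxn.ne'
    rw [hc]; push_cast; field_simp
  rw [this, one_smul]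
end

section
/- Let H be a complex Hilbert space, e₁,…,e_m an orthonormal family in H, r_k, ρ_k ≥ 0 with ∑ₖ(r_k²+ρ_k²) > 0, and x₁,…,xₙ ∈ H satisfying r_k‖xⱼ‖ ≤ Re⟨eₖ,xⱼ⟩ and ρ_k‖xⱼ‖ ≤ Im⟨eₖ,xⱼ⟩ for all j,k. Then equality (∑ₖ(r_k²+ρ_k²))^{1/2} ∑ⱼ‖xⱼ‖ = ‖∑ⱼ xⱼ‖ holds if and only if ∑ⱼ xⱼ = (∑ⱼ‖xⱼ‖) ∑ₖ (r_k + iρ_k) eₖ. -/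
/-!
Put `v = ∑ₖ (rₖ + iρₖ) eₖ` and `S = ∑ₖ (rₖ² + ρₖ²)`, so `‖v‖² = S` by orthonormality. The
hypotheses give `Re⟨v, xⱼ⟩ = ∑ₖ (rₖ Re⟨eₖ, xⱼ⟩ + ρₖ Im⟨eₖ, xⱼ⟩) ≥ S ‖xⱼ‖`, hence
`Re⟨v, ∑ⱼ xⱼ⟩ ≥ L ‖v‖²` with `L = ∑ⱼ ‖xⱼ‖`. Under this bound, `‖∑ⱼ xⱼ‖ = L ‖v‖` forces
`‖∑ⱼ xⱼ - L v‖² ≤ 0`.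
-/

open RCLike Finset

section

variable {𝕜 E : Type*} [RCLike 𝕜] [NormedAddCommGroup E] [InnerProductSpace 𝕜 E]

theorem Orthonormal.norm_sum_smul_sq {ι : Type*} {v : ι → E} (hv : Orthonormal 𝕜 v)
    (c : ι → 𝕜) (s : Finset ι) : ‖∑ i ∈ s, c i • v i‖ ^ 2 = ∑ i ∈ s, ‖c i‖ ^ 2 := by
  have h := hv.inner_sum c c s
  simp only [inner_self_eq_norm_sq_to_K, RCLike.conj_mul] at h
  exact_mod_cast h

theorem norm_eq_mul_norm_iff_eq_smul_of_le_re_inner {v w : E} {L : ℝ} (hL : 0 ≤ L)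
    (hre : L * ‖v‖ ^ 2 ≤ re (inner 𝕜 v w)) : ‖w‖ = L * ‖v‖ ↔ w = (L : 𝕜) • v := by
  constructor
  · intro hw
    have h : ‖w - (L : 𝕜) • v‖ ^ 2 ≤ 0 := by
      rw [@norm_sub_sq 𝕜, inner_smul_right, re_ofReal_mul, ← inner_conj_symm, conj_re, norm_smul,
        hw, norm_ofReal, abs_of_nonneg hL]
      nlinarith
    rw [← sub_eq_zero, ← norm_eq_zero]
    exact (pow_eq_zero_iff two_ne_zero).mp (le_antisymm h (sq_nonneg _))
  · rintro rfl
    rw [norm_smul, norm_ofReal, abs_of_nonneg hL]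

end

theorem sum_sq_mul_norm_le_re_inner_sum_smul {ι H : Type*} [Fintype ι] [NormedAddCommGroup H]
    [InnerProductSpace ℂ H] (e : ι → H) (r ρ : ι → ℝ) (hr : ∀ k, 0 ≤ r k) (hρ : ∀ k, 0 ≤ ρ k)
    {x : H} (h₁ : ∀ k, r k * ‖x‖ ≤ (inner ℂ (e k) x).re)
    (h₂ : ∀ k, ρ k * ‖x‖ ≤ (inner ℂ (e k) x).im) :
    (∑ k, (r k ^ 2 + ρ k ^ 2)) * ‖x‖ ≤
      (inner ℂ (∑ k, ((r k : ℂ) + ρ k * Complex.I) • e k) x).re := by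
  rw [sum_inner, Complex.re_sum, sum_mul]
  gcongr with k
  have hr' := mul_le_mul_of_nonneg_left (h₁ k) (hr k)
  have hρ' := mul_le_mul_of_nonneg_left (h₂ k) (hρ k)
  simp only [inner_smul_left, map_add, Complex.conj_ofReal, map_mul, Complex.conj_I,
    Complex.mul_re, Complex.add_re, Complex.add_im, Complex.ofReal_re, Complex.ofReal_im,
    Complex.mul_im, Complex.I_re, Complex.I_im, Complex.neg_re, Complex.neg_im]
  nlinarith

theorem stmt12_general {H : Type*} [NormedAddCommGroup H] [InnerProductSpace ℂ H]
    (m n : ℕ) (e : Fin m → H) (he : Orthonormal ℂ e) (x : Fin n → H)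
    (r ρ : Fin m → ℝ) (hr : ∀ k, 0 ≤ r k) (hρ : ∀ k, 0 ≤ ρ k)
    (h₁ : ∀ j k, r k * ‖x j‖ ≤ (inner ℂ (e k) (x j) : ℂ).re)
    (h₂ : ∀ j k, ρ k * ‖x j‖ ≤ (inner ℂ (e k) (x j) : ℂ).im) :
    Real.sqrt (∑ k, (r k ^ 2 + ρ k ^ 2)) * ∑ j, ‖x j‖ = ‖∑ j, x j‖ ↔
      ∑ j, x j = ((∑ j, ‖x j‖ : ℝ) : ℂ) • ∑ k, ((r k : ℂ) + (ρ k : ℂ) * Complex.I) • e k := by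
  set v := ∑ k, ((r k : ℂ) + (ρ k : ℂ) * Complex.I) • e k
  have hv : ‖v‖ ^ 2 = ∑ k, (r k ^ 2 + ρ k ^ 2) := by
    simp only [v, he.norm_sum_smul_sq, Complex.sq_norm, Complex.normSq_add_mul_I]
  have hre : (∑ j, ‖x j‖) * ‖v‖ ^ 2 ≤ (inner ℂ v (∑ j, x j)).re := by
    rw [inner_sum, Complex.re_sum, sum_mul]
    gcongr with j
    rw [mul_comm, hv]
    exact sum_sq_mul_norm_le_re_inner_sum_smul e r ρ hr hρ (h₁ j) (h₂ j)
  rw [← hv, Real.sqrt_sq (norm_nonneg v), mul_comm, eq_comm]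
  exact norm_eq_mul_norm_iff_eq_smul_of_le_re_inner (sum_nonneg fun j _ => norm_nonneg (x j)) hre

theorem stmt12 {H : Type*} [NormedAddCommGroup H] [InnerProductSpace ℂ H]
    (m n : ℕ) (e : Fin m → H) (he : Orthonormal ℂ e) (x : Fin n → H)
    (r ρ : Fin m → ℝ) (hr : ∀ k, 0 ≤ r k) (hρ : ∀ k, 0 ≤ ρ k)
    (hS : 0 < ∑ k, (r k ^ 2 + ρ k ^ 2))
    (h₁ : ∀ j k, r k * ‖x j‖ ≤ (inner ℂ (e k) (x j) : ℂ).re)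
    (h₂ : ∀ j k, ρ k * ‖x j‖ ≤ (inner ℂ (e k) (x j) : ℂ).im) :
    Real.sqrt (∑ k, (r k ^ 2 + ρ k ^ 2)) * ∑ j, ‖x j‖ = ‖∑ j, x j‖ ↔
      ∑ j, x j = ((∑ j, ‖x j‖ : ℝ) : ℂ) • ∑ k, ((r k : ℂ) + (ρ k : ℂ) * Complex.I) • e k :=
  stmt12_general m n e he x r ρ hr hρ h₁ h₂
end

section
/- Let H be a complex Hilbert space, e₁,…,e_m an orthonormal family, x₁,…,xₙ ∈ H, and M_{jk} ≥ 0 real numbers such that ‖xⱼ‖ − Re⟨eₖ,xⱼ⟩ ≤ M_{jk} for all 1 ≤ j ≤ n, 1 ≤ k ≤ m. Then ∑ⱼ‖xⱼ‖ ≤ (1/√m)‖∑ⱼ xⱼ‖ + (1/m)∑ⱼ∑ₖ M_{jk}. -/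
/-!
Put `u = ∑ₖ eₖ`. Orthonormality gives `‖u‖ = √m`. Summing the hypothesis over `k` gives
`m ∑ⱼ ‖xⱼ‖ ≤ Re ⟪u, ∑ⱼ xⱼ⟫ + ∑ⱼ∑ₖ Mⱼₖ`, and Cauchy–Schwarz bounds the real part by `√m ‖∑ⱼ xⱼ‖`.
-/

open Finset
open scoped InnerProductSpace

section

variable {𝕜 E : Type*} [RCLike 𝕜] [NormedAddCommGroup E] [InnerProductSpace 𝕜 E]
  {ι κ : Type*} [Fintype ι] [Fintype κ]

theorem Orthonormal.norm_sum_eq_sqrt_card {e : ι → E} (he : Orthonormal 𝕜 e) :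
    ‖∑ i, e i‖ = √(Fintype.card ι) := by
  have hsq : ‖∑ i, e i‖ ^ 2 = Fintype.card ι := by
    have := he.inner_sum (fun _ ↦ 1) (fun _ ↦ 1) univ
    simp only [one_smul, map_one, mul_one, sum_const, card_univ, nsmul_eq_mul] at this
    rw [← inner_self_eq_norm_sq (𝕜 := 𝕜), this]
    simp
  rw [← hsq, Real.sqrt_sq (norm_nonneg _)]

theorem card_mul_sum_norm_le {e : κ → E} (he : Orthonormal 𝕜 e) (x : ι → E) (M : ι → κ → ℝ)
    (h : ∀ j k, ‖x j‖ - RCLike.re ⟪e k, x j⟫_𝕜 ≤ M j k) :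
    Fintype.card κ * ∑ j, ‖x j‖ ≤ √(Fintype.card κ) * ‖∑ j, x j‖ + ∑ j, ∑ k, M j k := by
  have hre : ∑ j, ∑ k, RCLike.re ⟪e k, x j⟫_𝕜 = RCLike.re ⟪∑ k, e k, ∑ j, x j⟫_𝕜 := by
    simp only [sum_inner, inner_sum, map_sum]
  have hcs : RCLike.re ⟪∑ k, e k, ∑ j, x j⟫_𝕜 ≤ √(Fintype.card κ) * ‖∑ j, x j‖ := by
    simpa only [he.norm_sum_eq_sqrt_card] using re_inner_le_norm (∑ k, e k) (∑ j, x j)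
  calc (Fintype.card κ : ℝ) * ∑ j, ‖x j‖ = ∑ j, ∑ _k : κ, ‖x j‖ := by simp [mul_sum]
    _ ≤ ∑ j, ∑ k, (RCLike.re ⟪e k, x j⟫_𝕜 + M j k) :=
        sum_le_sum fun j _ ↦ sum_le_sum fun k _ ↦ by linarith [h j k]
    _ = RCLike.re ⟪∑ k, e k, ∑ j, x j⟫_𝕜 + ∑ j, ∑ k, M j k := by
        simp only [sum_add_distrib, hre]
    _ ≤ √(Fintype.card κ) * ‖∑ j, x j‖ + ∑ j, ∑ k, M j k := by gcongr

end

theorem stmt13_general {H : Type*} [NormedAddCommGroup H] [InnerProductSpace ℂ H]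
    (m n : ℕ) (hm : 0 < m) (e : Fin m → H) (he : Orthonormal ℂ e) (x : Fin n → H)
    (M : Fin n → Fin m → ℝ)
    (h : ∀ j k, ‖x j‖ - (inner ℂ (e k) (x j) : ℂ).re ≤ M j k) :
    ∑ j, ‖x j‖ ≤ (1 / Real.sqrt m) * ‖∑ j, x j‖ + (1 / m) * ∑ j, ∑ k, M j k := by
  have key := card_mul_sum_norm_le he x M h
  rw [Fintype.card_fin] at key
  have hm' : (0 : ℝ) < m := by exact_mod_cast hm
  have hsqrt : √(m : ℝ) * √(m : ℝ) = m := Real.mul_self_sqrt hm'.le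
  rw [← mul_le_mul_iff_of_pos_left hm']
  calc (m : ℝ) * ∑ j, ‖x j‖ ≤ √(m : ℝ) * ‖∑ j, x j‖ + ∑ j, ∑ k, M j k := key
    _ = m * (1 / √(m : ℝ) * ‖∑ j, x j‖ + 1 / m * ∑ j, ∑ k, M j k) := by
        field_simp
        linear_combination ‖∑ j, x j‖ * hsqrt

theorem stmt13 {H : Type*} [NormedAddCommGroup H] [InnerProductSpace ℂ H]
    (m n : ℕ) (hm : 0 < m) (e : Fin m → H) (he : Orthonormal ℂ e) (x : Fin n → H)
    (M : Fin n → Fin m → ℝ) (hM : ∀ j k, 0 ≤ M j k)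
    (h : ∀ j k, ‖x j‖ - (inner ℂ (e k) (x j) : ℂ).re ≤ M j k) :
    ∑ j, ‖x j‖ ≤ (1 / Real.sqrt m) * ‖∑ j, x j‖ + (1 / m) * ∑ j, ∑ k, M j k :=
  stmt13_general m n hm e he x M h
end

section
/- Let H be a complex Hilbert space, e₁,…,e_m an orthonormal family, x₁,…,xₙ ∈ H, and M_{jk} ≥ 0 with ‖xⱼ‖ − Re⟨eₖ,xⱼ⟩ ≤ M_{jk} for all j,k. Then equality ∑ⱼ‖xⱼ‖ = (1/√m)‖∑ⱼ xⱼ‖ + (1/m)∑ⱼ∑ₖ M_{jk} holds if and only if ∑ⱼ‖xⱼ‖ ≥ (1/m)∑ⱼ∑ₖ M_{jk} and ∑ⱼ xⱼ = (∑ⱼ‖xⱼ‖ − (1/m)∑ⱼ∑ₖ M_{jk}) ∑ₖ eₖ. -/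
/-!
With `u = ∑ₖ eₖ`, `S = ∑ⱼ xⱼ` and `B = (1/m) ∑ⱼ∑ₖ M_{jk}`, summing the hypotheses over `j, k` gives
`m (∑ⱼ ‖xⱼ‖ - B) ≤ Re⟪u, S⟫ ≤ ‖u‖ ‖S‖ = √m ‖S‖`. The claimed identity says that both inequalities
are equalities, and equality in `Re⟪u, S⟫ ≤ ‖u‖ ‖S‖` forces `S = (‖S‖ / ‖u‖) • u`.
-/

open Finset RCLike
open scoped InnerProductSpace

section

variable {𝕜 E : Type*} [RCLike 𝕜] [NormedAddCommGroup E] [InnerProductSpace 𝕜 E]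

theorem Orthonormal.norm_sum {ι : Type*} [Fintype ι] {e : ι → E} (he : Orthonormal 𝕜 e) :
    ‖∑ i, e i‖ = √(Fintype.card ι) := by
  have hinner : ⟪∑ i, e i, ∑ i, e i⟫_𝕜 = Fintype.card ι := by
    simpa using he.inner_sum (fun _ ↦ 1) (fun _ ↦ 1) univ
  rw [norm_eq_sqrt_re_inner (𝕜 := 𝕜), hinner, natCast_re]

theorem card_mul_sum_norm_sub_le_re_inner_sum {ι κ : Type*} [Fintype ι] [Fintype κ]
    (e : κ → E) (x : ι → E) (M : ι → κ → ℝ) (h : ∀ j k, ‖x j‖ - re ⟪e k, x j⟫_𝕜 ≤ M j k) :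
    Fintype.card κ * ∑ j, ‖x j‖ - ∑ j, ∑ k, M j k ≤ re ⟪∑ k, e k, ∑ j, x j⟫_𝕜 := by
  have hre : re ⟪∑ k, e k, ∑ j, x j⟫_𝕜 = ∑ j, ∑ k, re ⟪e k, x j⟫_𝕜 := by
    simp only [sum_inner, inner_sum, map_sum]
  have hcard : Fintype.card κ * ∑ j, ‖x j‖ = ∑ j, ∑ _k : κ, ‖x j‖ := by
    simp [mul_sum]
  rw [hre, hcard, ← sum_sub_distrib]
  refine sum_le_sum fun j _ ↦ ?_
  rw [← sum_sub_distrib]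
  exact sum_le_sum fun k _ ↦ by linarith [h j k]

theorem eq_smul_of_re_inner_eq_norm_mul {u y : E} (hu : u ≠ 0)
    (h : re ⟪u, y⟫_𝕜 = ‖u‖ * ‖y‖) : y = ((‖y‖ / ‖u‖ : ℝ) : 𝕜) • u := by
  have hinner : ⟪u, y⟫_𝕜 = ‖u‖ * ‖y‖ := by
    rw [← re_eq_self_of_le (a := ⟪u, y⟫_𝕜) (h ▸ norm_inner_le_norm u y), h, ofReal_mul]
  rw [ofReal_div]
  exact ((inner_eq_norm_mul_iff_div hu).mp hinner).symm

end

theorem stmt14_general {H : Type*} [NormedAddCommGroup H] [InnerProductSpace ℂ H]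
    (m n : ℕ) (hm : 0 < m) (e : Fin m → H) (he : Orthonormal ℂ e) (x : Fin n → H)
    (M : Fin n → Fin m → ℝ)
    (h : ∀ j k, ‖x j‖ - (inner ℂ (e k) (x j) : ℂ).re ≤ M j k) :
    ∑ j, ‖x j‖ = (1 / Real.sqrt m) * ‖∑ j, x j‖ + (1 / m) * ∑ j, ∑ k, M j k ↔
      ((1 / m) * ∑ j, ∑ k, M j k ≤ ∑ j, ‖x j‖ ∧
        ∑ j, x j = ((∑ j, ‖x j‖ - (1 / m) * ∑ j, ∑ k, M j k : ℝ) : ℂ) • ∑ k, e k) := by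
  set S := ∑ j, x j
  set u := ∑ k, e k
  set A := ∑ j, ‖x j‖
  set B := (1 / m) * ∑ j, ∑ k, M j k
  have hm' : (0 : ℝ) < m := by exact_mod_cast hm
  have hsqrt : 0 < √(m : ℝ) := Real.sqrt_pos.mpr hm'
  have hu : ‖u‖ = √m := by simpa using he.norm_sum
  have hlower : ‖u‖ * (√m * (A - B)) ≤ re ⟪u, S⟫_ℂ := by
    have hcard : (m : ℝ) * A - ∑ j, ∑ k, M j k ≤ re ⟪u, S⟫_ℂ := by
      simpa using card_mul_sum_norm_sub_le_re_inner_sum (𝕜 := ℂ) e x M h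
    have hmB : (m : ℝ) * B = ∑ j, ∑ k, M j k := by
      rw [← mul_assoc, mul_one_div_cancel hm'.ne', one_mul]
    rw [hu, ← mul_assoc, Real.mul_self_sqrt hm'.le]
    linarith
  constructor
  · intro heq
    have hS : ‖S‖ = √m * (A - B) := by
      field_simp at heq ⊢
      linarith
    have hAB : 0 ≤ A - B := nonneg_of_mul_nonneg_right (hS ▸ norm_nonneg S) hsqrt
    refine ⟨by linarith, ?_⟩
    have hu0 : u ≠ 0 := norm_ne_zero_iff.mp (hu ▸ hsqrt.ne')
    rw [eq_smul_of_re_inner_eq_norm_mul hu0 (le_antisymm (re_inner_le_norm u S) (hS ▸ hlower)),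
      hS, hu, mul_div_cancel_left₀ _ hsqrt.ne']
    rfl
  · rintro ⟨hBA, hSe⟩
    rw [hSe, norm_smul, hu, Complex.norm_real, Real.norm_of_nonneg (sub_nonneg.mpr hBA)]
    field_simp
    ring

theorem stmt14 {H : Type*} [NormedAddCommGroup H] [InnerProductSpace ℂ H]
    (m n : ℕ) (hm : 0 < m) (e : Fin m → H) (he : Orthonormal ℂ e) (x : Fin n → H)
    (M : Fin n → Fin m → ℝ) (hM : ∀ j k, 0 ≤ M j k)
    (h : ∀ j k, ‖x j‖ - (inner ℂ (e k) (x j) : ℂ).re ≤ M j k) :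
    ∑ j, ‖x j‖ = (1 / Real.sqrt m) * ‖∑ j, x j‖ + (1 / m) * ∑ j, ∑ k, M j k ↔
      ((1 / m) * ∑ j, ∑ k, M j k ≤ ∑ j, ‖x j‖ ∧
        ∑ j, x j = ((∑ j, ‖x j‖ - (1 / m) * ∑ j, ∑ k, M j k : ℝ) : ℂ) • ∑ k, e k) :=
  stmt14_general m n hm e he x M h
end
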